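/- Let 1 ≤ k ≤ n − 3, let z be the pendant vertex of L_{n,n−k}, and let G be any connected graph on n vertices with exactly k cut vertices. Then for every vertex v of G, D_G(v) ≤ D_{L_{n,n−k}}(z). -/

import Mathlib

open SimpleGraph

variable {V : Type*}

/-- The distance (transmission) of a vertex `v`: the sum of distances from `v`
to all other vertices. -/
noncomputable def vertexDistance [Fintype V] (G : SimpleGraph V) (v : V) : ℕ :=
  ∑ u : V, G.dist v u

/-- The Wiener index: the sum of distances over all unordered pairs of vertices. -/
noncomputable def wienerIndex [Fintype V] (G : SimpleGraph V) : ℕ :=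
  (∑ u : V, ∑ v : V, G.dist u v) / 2

/-- `v` is a cut vertex of `G` if deleting it leaves a disconnected
(or empty) graph. -/
def IsCutVertex (G : SimpleGraph V) (v : V) : Prop :=
  ¬ (G.induce ({v}ᶜ : Set V)).Connected

/-- The number of cut vertices of `G`. -/
noncomputable def cutVertexCount (G : SimpleGraph V) : ℕ :=
  {v : V | IsCutVertex G v}.ncard

/-- `B` is (the vertex set of) a block of `G`: a maximal connected subgraph on at
least two vertices that has no cut vertex of its own. -/
def IsBlock (G : SimpleGraph V) (B : Set V) : Prop :=
  2 ≤ B.ncard ∧ (G.induce B).Connected ∧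
    (∀ v : B, ¬ IsCutVertex (G.induce B) v) ∧
    ∀ C : Set V, B ⊆ C → (G.induce C).Connected →
      (∀ v : C, ¬ IsCutVertex (G.induce C) v) → C = B

/-- A pendant block: a block containing exactly one cut vertex of `G`. -/
def IsPendantBlock (G : SimpleGraph V) (B : Set V) : Prop :=
  IsBlock G B ∧ {v ∈ B | IsCutVertex G v}.ncard = 1

/-- An s-pendant block: a pendant block which shares its cut vertex with exactly
one non-pendant block of `G`. -/
def IsSPendantBlock (G : SimpleGraph V) (B : Set V) : Prop :=
  IsPendantBlock G B ∧
    ∀ w ∈ B, IsCutVertex G w →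
      {C : Set V | IsBlock G C ∧ ¬ IsPendantBlock G C ∧ w ∈ C}.ncard = 1

/-- The graph `L_{n,g}`: a cycle `C_g` on the vertices `0, …, g-1` (consecutive
edges together with the chord `{0, g-1}`) with the path `g-1, g, …, n-1`
attached at the vertex `g-1`.  For `g < n` its unique pendant vertex is `n-1`.
For `g = n` this is the cycle `C_n`. -/
def lollipop (n g : ℕ) : SimpleGraph (Fin n) :=
  SimpleGraph.fromRel (fun i j =>
    (i : ℕ) + 1 = (j : ℕ) ∨ ((i : ℕ) = 0 ∧ (j : ℕ) = g - 1))

/-- The cycle `C_n` on `n` vertices. -/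
def cycleG (n : ℕ) : SimpleGraph (Fin n) := lollipop n n

/-- The graph `C_{m₁,m₂}ⁿ`: a cycle `C_{m₁}` on `0, …, m₁-1`, a cycle `C_{m₂}`
on `n-m₂, …, n-1`, joined by the path `m₁-1, m₁, …, n-m₂` (which degenerates to
a single identified vertex when `n = m₁+m₂-1`). -/
def dumbbell (n m₁ m₂ : ℕ) : SimpleGraph (Fin n) :=
  SimpleGraph.fromRel (fun i j =>
    (i : ℕ) + 1 = (j : ℕ) ∨ ((i : ℕ) = 0 ∧ (j : ℕ) = m₁ - 1)
      ∨ ((i : ℕ) = n - m₂ ∧ (j : ℕ) = n - 1))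

/-- Identify the vertex `w` of `H` with the vertex `u` of `G`:  the resulting
graph on `U ⊕ {x : W // x ≠ w}` whose edges are those of `G`, those of `H` not
meeting `w`, and the edges of `H` at `w` re-attached at `u`. -/
def glue {U W : Type*} (G : SimpleGraph U) (u : U) (H : SimpleGraph W) (w : W) :
    SimpleGraph (U ⊕ {x : W // x ≠ w}) :=
  SimpleGraph.fromRel (fun a b =>
    match a, b with
    | Sum.inl x, Sum.inl y => G.Adj x y
    | Sum.inl x, Sum.inr y => x = u ∧ H.Adj w y.val
    | Sum.inr x, Sum.inr y => H.Adj x.val y.val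
    | _, _ => False)


/-!
Layer by layer: `D_G(v) = ∑ₜ #{u | t < d(v, u)}`. If some vertex lies beyond distance `t`
from `v`, every level `1 ≤ i ≤ t` is nonempty, and a level that is a single vertex consists
of a cut vertex, since a walk from `v` to anything beyond it must pass through it. So the
levels `1, …, t` hold at least `2t - min t k` vertices, which leaves at most
`n - 1 - 2t + min t k` vertices beyond `t`. Seen from the pendant vertex of `L_{n,n-k}`,
all vertices with labels in `[t - k, n - 1 - t)` lie beyond `t`, so there these counts are met.
-/

open Finset

theorem Finset.sum_eq_sum_range_card_filter_lt {ι : Type*} (s : Finset ι) (d : ι → ℕ)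
    {N : ℕ} (hd : ∀ x ∈ s, d x ≤ N) :
    ∑ x ∈ s, d x = ∑ t ∈ range N, #{x ∈ s | t < d x} := by
  have hfilter (x) (hx : x ∈ s) :
      (range N).bipartiteAbove (fun x t => t < d x) x = range (d x) := by
    ext t
    simp only [bipartiteAbove, mem_filter, mem_range]
    have := hd x hx
    omega
  calc ∑ x ∈ s, d x = ∑ x ∈ s, #((range N).bipartiteAbove (fun x t => t < d x) x) :=
        sum_congr rfl fun x hx => by rw [hfilter x hx, card_range]
    _ = _ := sum_card_bipartiteAbove_eq_sum_card_bipartiteBelow _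

namespace SimpleGraph

variable {G : SimpleGraph V}

theorem Walk.exists_mem_support_dist_eq {v a b : V} (p : G.Walk a b) {i : ℕ}
    (ha : G.dist v a ≤ i) (hb : i ≤ G.dist v b) : ∃ w ∈ p.support, G.dist v w = i := by
  induction p with
  | nil => exact ⟨_, Walk.start_mem_support _, by omega⟩
  | @cons a c b h q ih =>
    rcases ha.eq_or_lt with ha | ha
    · exact ⟨a, Walk.start_mem_support _, ha⟩
    · have := h.diff_dist_adj (u := v)
      obtain ⟨w, hw, hwi⟩ := ih (by omega) hb
      exact ⟨w, by simp [hw], hwi⟩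

theorem exists_dist_eq_of_le_dist {v u : V} {i : ℕ} (h : i ≤ G.dist v u) :
    ∃ w, G.dist v w = i := by
  by_cases hu : G.dist v u = 0
  · exact ⟨v, by simp; omega⟩
  obtain ⟨p, -⟩ := exists_walk_of_dist_ne_zero hu
  obtain ⟨w, -, hw⟩ := p.exists_mem_support_dist_eq (v := v) (by simp) h
  exact ⟨w, hw⟩

theorem isCutVertex_of_forall_dist_eq_iff {v w u : V} {i : ℕ} (hi : 0 < i)
    (hw : ∀ x, G.dist v x = i ↔ x = w) (hu : i < G.dist v u) : IsCutVertex G w := by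
  intro hconn
  have hv : v ≠ w := by rintro rfl; have := (hw v).2 rfl; rw [dist_self] at this; omega
  have hu' : u ≠ w := by rintro rfl; have := (hw u).2 rfl; omega
  obtain ⟨p⟩ := hconn.preconnected ⟨v, hv⟩ ⟨u, hu'⟩
  obtain ⟨x, hx, hxi⟩ :=
    (p.map (Embedding.induce _).toHom).exists_mem_support_dist_eq (v := v) (i := i)
      (by simp) hu.le
  rw [Walk.support_map, List.mem_map] at hx
  obtain ⟨y, -, rfl⟩ := hx
  exact y.2 ((hw y).1 hxi)

open Classical in
theorem two_le_card_dist_eq_add_card_cutVertex [Fintype V] {v u : V} {i : ℕ} (hi : 0 < i)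
    (hu : i < G.dist v u) :
    2 ≤ #{x | G.dist v x = i} + #{x ∈ {x | IsCutVertex G x} | G.dist v x = i} := by
  obtain ⟨w, hw⟩ := exists_dist_eq_of_le_dist hu.le
  have hpos : 0 < #{x | G.dist v x = i} := card_pos.2 ⟨w, by simpa using hw⟩
  by_cases hone : #{x | G.dist v x = i} = 1
  · obtain ⟨w, hlevel⟩ := card_eq_one.1 hone
    have hcut : IsCutVertex G w :=
      isCutVertex_of_forall_dist_eq_iff hi (fun x => by simpa using congr(x ∈ $hlevel)) hu
    have hw : G.dist v w = i := by simpa using congr(w ∈ $hlevel)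
    have : 0 < #{x ∈ {x | IsCutVertex G x} | G.dist v x = i} :=
      card_pos.2 ⟨w, by simp [hcut, hw]⟩
    omega
  · omega

theorem card_filter_lt_dist_le [Fintype V] (v : V) (t : ℕ) :
    #{u | t < G.dist v u} ≤ Fintype.card V + min t (cutVertexCount G) - 1 - 2 * t := by
  classical
  rcases ({u | t < G.dist v u} : Finset V).eq_empty_or_nonempty with h | ⟨u, hu⟩
  · simp [h]
  set F : Finset V := {x | G.dist v x ∈ Icc 1 t}
  have hlevels : 2 * t ≤ #F + #{x ∈ {x | IsCutVertex G x} | G.dist v x ∈ Icc 1 t} := by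
    rw [← sum_card_fiberwise_eq_card_filter, ← sum_card_fiberwise_eq_card_filter,
      ← sum_add_distrib]
    calc 2 * t = ∑ i ∈ Icc 1 t, 2 := by simp [mul_comm]
      _ ≤ _ := sum_le_sum fun i hi => by
        simp only [mem_Icc] at hi
        exact two_le_card_dist_eq_add_card_cutVertex (by omega)
          (hi.2.trans_lt (by simpa using hu))
  have hcut : #{x ∈ {x | IsCutVertex G x} | G.dist v x ∈ Icc 1 t} ≤ cutVertexCount G := by
    rw [cutVertexCount, ← Set.ncard_coe_finset]
    exact Set.ncard_le_ncard (by intro x; simp +contextual)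
  have hcutF : #{x ∈ {x | IsCutVertex G x} | G.dist v x ∈ Icc 1 t} ≤ #F :=
    card_le_card (by intro x; simp +contextual [F])
  have hdisj : #{u | t < G.dist v u} + #F ≤ Fintype.card V - 1 := by
    rw [← card_union_of_disjoint, ← card_univ, ← card_erase_of_mem (mem_univ v)]
    · exact card_le_card fun x hx => mem_erase.2 ⟨by rintro rfl; simp [F] at hx, mem_univ x⟩
    · exact disjoint_filter.2 fun x _ h1 h2 => by rw [mem_Icc] at h2; omega
  omega

theorem dist_lt_card [Fintype V] (u v : V) : G.dist u v < Fintype.card V := by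
  by_cases h : G.dist u v = 0
  · exact h ▸ Fintype.card_pos_iff.2 ⟨u⟩
  obtain ⟨p, hp, hlen⟩ := (Reachable.of_dist_ne_zero h).exists_path_of_dist
  exact hlen ▸ hp.length_lt

theorem vertexDistance_le_sum_range [Fintype V] (v : V) :
    vertexDistance G v ≤ ∑ t ∈ range (Fintype.card V),
      (Fintype.card V + min t (cutVertexCount G) - 1 - 2 * t) := by
  classical
  rw [vertexDistance, sum_eq_sum_range_card_filter_lt _ _ fun u _ => (dist_lt_card v u).le]
  exact sum_le_sum fun t _ => card_filter_lt_dist_le v t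

theorem Walk.le_add_length_of_adj_le {f : V → ℕ} (hf : ∀ a b, G.Adj a b → f b ≤ f a + 1)
    {a b : V} (p : G.Walk a b) : f b ≤ f a + p.length := by
  induction p with
  | nil => simp
  | cons h q ih =>
    have := hf _ _ h
    simp only [Walk.length_cons]
    omega

end SimpleGraph

open SimpleGraph

/-- The distance from the pendant vertex `n - 1` of `L_{n,n-k}` to the vertex `j`: along the
path down to `n - k - 1`, then around the cycle. -/
def lollipopPendantDist (n k j : ℕ) : ℕ :=
  if n - k - 1 ≤ j then n - 1 - j else k + min (j + 1) (n - k - 1 - j)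

theorem lollipopPendantDist_le_of_adj {n k : ℕ} {a b : Fin n}
    (h : (lollipop n (n - k)).Adj a b) :
    lollipopPendantDist n k b ≤ lollipopPendantDist n k a + 1 := by
  have := a.isLt
  have := b.isLt
  simp only [lollipop, fromRel_adj, ne_eq, Fin.ext_iff] at h
  unfold lollipopPendantDist
  split_ifs <;> omega

theorem pathGraph_le_lollipop (n g : ℕ) : pathGraph n ≤ lollipop n g := fun u v h => by
  rw [pathGraph_adj] at h
  simp only [lollipop, fromRel_adj, ne_eq, Fin.ext_iff]
  omega

theorem lollipopPendantDist_le_dist {n : ℕ} (k : ℕ) (hn : n - 1 < n) (u : Fin n) :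
    lollipopPendantDist n k u ≤ (lollipop n (n - k)).dist ⟨n - 1, hn⟩ u := by
  obtain ⟨p, hp⟩ := ((pathGraph_preconnected n).mono (pathGraph_le_lollipop n (n - k))
    ⟨n - 1, hn⟩ u).exists_walk_length_eq_dist
  have := p.le_add_length_of_adj_le (f := fun u : Fin n => lollipopPendantDist n k u)
    fun _ _ h => lollipopPendantDist_le_of_adj h
  have h0 : lollipopPendantDist n k (n - 1) = 0 := by
    rw [lollipopPendantDist, if_pos (by omega), Nat.sub_self]
  simpa only [Fin.val_mk, h0, hp, zero_add] using this

theorem Ico_subset_filter_lt_lollipopPendantDist (n k t : ℕ) :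
    Ico (t - k) (n - 1 - t) ⊆ {j ∈ range n | t < lollipopPendantDist n k j} := by
  intro j hj
  rw [mem_Ico] at hj
  rw [mem_filter, mem_range, lollipopPendantDist]
  split_ifs <;> omega

theorem sum_le_vertexDistance_lollipop {n : ℕ} (k : ℕ) (hn : n - 1 < n) :
    ∑ t ∈ range n, (n + min t k - 1 - 2 * t) ≤
      vertexDistance (lollipop n (n - k)) ⟨n - 1, hn⟩ := by
  calc ∑ t ∈ range n, (n + min t k - 1 - 2 * t)
      = ∑ t ∈ range n, #(Ico (t - k) (n - 1 - t)) := sum_congr rfl fun t _ => by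
        rw [Nat.card_Ico]; omega
    _ ≤ ∑ t ∈ range n, #{j ∈ range n | t < lollipopPendantDist n k j} :=
        sum_le_sum fun t _ => card_le_card (Ico_subset_filter_lt_lollipopPendantDist n k t)
    _ = ∑ j ∈ range n, lollipopPendantDist n k j :=
        (sum_eq_sum_range_card_filter_lt _ _ fun j _ => by
          unfold lollipopPendantDist; split_ifs <;> omega).symm
    _ = ∑ u : Fin n, lollipopPendantDist n k u :=
        (Fin.sum_univ_eq_sum_range (lollipopPendantDist n k) n).symm
    _ ≤ vertexDistance (lollipop n (n - k)) ⟨n - 1, hn⟩ :=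
        sum_le_sum fun u _ => lollipopPendantDist_le_dist k hn u

/-- For every connected graph `G` on `n` vertices with exactly `k` cut vertices
(`1 ≤ k ≤ n-3`) and every vertex `v` of `G`, the distance of `v` is at most the
distance of the pendant vertex of `L_{n,n-k}`. -/
theorem stmt11 (n k : ℕ) (hk : 1 ≤ k) (hkn : k ≤ n - 3)
    (G : SimpleGraph (Fin n)) (hcut : cutVertexCount G = k)
    (v : Fin n) :
    vertexDistance G v ≤
      vertexDistance (lollipop n (n - k)) ⟨n - 1, by omega⟩ := by
  calc vertexDistance G v ≤ ∑ t ∈ range n, (n + min t k - 1 - 2 * t) := by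
        simpa only [Fintype.card_fin, hcut] using vertexDistance_le_sum_range (G := G) v
    _ ≤ _ := sum_le_vertexDistance_lollipop k _
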